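/- arXiv:2203.16812 — 3 statements merged into one kernel-verified Lean document; each statement's English description precedes it below -/
import Mathlib

section
/- For every integer k \ge 0 and all complex numbers u^1, u^2, q, setting v^1 := e^{u^1}(1+q e^{u^2}) and using q e^{v^2} = q e^{2u^1+u^2}, one has \sum_{d=0}^{\lfloor (k+1)/2 \rfloor} \frac{(q e^{2u^1+u^2})^d (v^1)^{k+1-2d}}{(d!)^2 (k+1-2d)!} = \frac{e^{(k+1)u^1}}{(k+1)!} \sum_{d=0}^{k+1} \binom{k+1}{d}^2 (q e^{u^2})^d. -/
open Finset

private lemma sum_trunc (f : ℕ → ℕ) (K N : ℕ) (hK : K ≤ N) (h0 : ∀ d, K < d → f d = 0) :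
    ∑ d ∈ range (N+1), f d = ∑ d ∈ range (K+1), f d := by
  refine (Finset.sum_subset (Finset.range_subset_range.mpr (by omega)) ?_).symm
  intro x hx hnx
  exact h0 x (by simp [Finset.mem_range] at hx hnx ⊢; omega)

private lemma vdm (n m N : ℕ) (h : m ≤ n) (hN : min m (n - m) ≤ N) :
    ∑ d ∈ range (N+1), m.choose d * (n-m).choose d = n.choose m := by
  set K := min m (n - m) with hK
  have h0 : ∀ d, K < d → m.choose d * (n-m).choose d = 0 := by
    intro d hd
    rcases min_lt_iff.mp hd with h' | h'
    · rw [Nat.choose_eq_zero_of_lt h', zero_mul]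
    · rw [Nat.choose_eq_zero_of_lt h', mul_zero]
  rw [sum_trunc _ K N hN h0, ← sum_trunc _ K (n-m) (min_le_right _ _) h0]
  have hA := Nat.add_choose_eq m (n-m) (n-m)
  rw [Nat.add_sub_cancel' h, Finset.Nat.sum_antidiagonal_eq_sum_range_succ_mk] at hA
  rw [← Nat.choose_symm h, hA]
  refine Finset.sum_congr rfl fun d hd => ?_
  have hd' : d ≤ n - m := by simpa [Nat.lt_succ_iff] using Finset.mem_range.mp hd
  rw [Nat.choose_symm hd']

private lemma L1 (n m d : ℕ) (h2 : 2*d ≤ n) (hm : m ≤ n) (hdm : d ≤ m) :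
    n.choose (2*d) * ((2*d).choose d * (n-2*d).choose (m-d))
    = n.choose m * (m.choose d * (n-m).choose d) := by
  by_cases hd : d ≤ n - m
  · have key : ((n.choose (2*d) * ((2*d).choose d * (n-2*d).choose (m-d)) : ℕ) : ℚ)
        = ((n.choose m * (m.choose d * (n-m).choose d) : ℕ) : ℚ) := by
      push_cast
      rw [Nat.cast_choose ℚ h2, Nat.cast_choose ℚ (show d ≤ 2*d by omega),
          Nat.cast_choose ℚ (show m - d ≤ n - 2*d by omega),
          Nat.cast_choose ℚ hm, Nat.cast_choose ℚ hdm, Nat.cast_choose ℚ hd]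
      have e1 : 2*d - d = d := by omega
      have e2 : n - 2*d - (m - d) = n - m - d := by omega
      have e3 : m - d - d = m - d - d := rfl
      rw [e1, e2]
      rw [div_mul_div_comm, div_mul_div_comm, div_mul_div_comm, div_mul_div_comm]
      rw [div_eq_div_iff (by positivity) (by positivity)]
      ring
    exact_mod_cast key
  · push_neg at hd
    rw [Nat.choose_eq_zero_of_lt (show n - 2*d < m - d by omega),
        Nat.choose_eq_zero_of_lt (show n - m < d by omega)]
    ring

private lemma keylem (n m : ℕ) :
    ∑ d ∈ range (n/2+1),
      (if d ≤ m then n.choose (2*d) * ((2*d).choose d * (n-2*d).choose (m-d)) else 0)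
    = n.choose m ^ 2 := by
  by_cases hm : m ≤ n
  · have hcong : ∀ d ∈ range (n/2+1),
        (if d ≤ m then n.choose (2*d) * ((2*d).choose d * (n-2*d).choose (m-d)) else 0)
        = n.choose m * (m.choose d * (n-m).choose d) := by
      intro d hd
      have h2 : 2*d ≤ n := by have := Finset.mem_range.mp hd; omega
      by_cases hdm : d ≤ m
      · rw [if_pos hdm, L1 n m d h2 hm hdm]
      · rw [if_neg hdm, Nat.choose_eq_zero_of_lt (show m < d by omega), zero_mul, mul_zero]
    rw [Finset.sum_congr rfl hcong, ← Finset.mul_sum,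
        vdm n m (n/2) hm (by rw [min_le_iff]; omega), sq]
  · push_neg at hm
    rw [Nat.choose_eq_zero_of_lt hm]
    rw [Finset.sum_eq_zero]
    · rfl
    intro d hd
    have h2 : 2*d ≤ n := by have := Finset.mem_range.mp hd; omega
    by_cases hdm : d ≤ m
    · rw [if_pos hdm, Nat.choose_eq_zero_of_lt (show n - 2*d < m - d by omega), mul_zero, mul_zero]
    · rw [if_neg hdm]

private lemma core2 (n : ℕ) (x : ℂ) :
    ∑ d ∈ range (n/2+1), ((n.choose (2*d) * ((2*d).choose d) : ℕ) : ℂ) * ((1+x)^(n-2*d) * x^d)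
    = ∑ j ∈ range (n+1), ((n.choose j : ℕ) : ℂ)^2 * x^j := by
  have hpoly : (∑ d ∈ range (n/2+1), Polynomial.C ((n.choose (2*d) * ((2*d).choose d) : ℕ) : ℂ)
        * ((1+Polynomial.X)^(n-2*d) * Polynomial.X^d))
      = ∑ j ∈ range (n+1), Polynomial.C (((n.choose j : ℕ) : ℂ)^2) * Polynomial.X^j := by
    ext m
    rw [Polynomial.finset_sum_coeff, Polynomial.finset_sum_coeff]
    have hR : ∑ j ∈ range (n+1), (Polynomial.C (((n.choose j:ℕ):ℂ)^2) * Polynomial.X^j).coeff m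
        = ((n.choose m : ℕ) : ℂ)^2 := by
      simp only [Polynomial.coeff_C_mul, Polynomial.coeff_X_pow, mul_ite, mul_one, mul_zero]
      rw [Finset.sum_ite_eq (range (n+1)) m]
      split
      · rfl
      · rename_i hmem
        rw [Nat.choose_eq_zero_of_lt (by simpa [Nat.lt_succ_iff, not_le] using hmem)]
        simp
    rw [hR]
    have hL : ∀ d, (Polynomial.C ((n.choose (2*d) * ((2*d).choose d):ℕ):ℂ)
          * ((1+Polynomial.X)^(n-2*d) * Polynomial.X^d)).coeff m
        = (((if d ≤ m then n.choose (2*d) * ((2*d).choose d * (n-2*d).choose (m-d)) else 0 : ℕ)) : ℂ) := by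
      intro d
      rw [Polynomial.coeff_C_mul, Polynomial.coeff_mul_X_pow', Polynomial.coeff_one_add_X_pow]
      split
      · push_cast; ring
      · simp
    simp only [hL]
    rw [← Nat.cast_sum, keylem n m]
    push_cast; ring
  have := congrArg (Polynomial.eval x) hpoly
  simpa [Polynomial.eval_finset_sum] using this

private lemma core (n : ℕ) (x : ℂ) :
    ∑ d ∈ range (n/2+1), (1+x)^(n-2*d) * x^d / ((d.factorial : ℂ)^2 * ((n-2*d).factorial : ℂ))
    = (1 / (n.factorial : ℂ)) * ∑ j ∈ range (n+1), ((n.choose j : ℕ):ℂ)^2 * x^j := by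
  rw [← core2 n x, Finset.mul_sum]
  refine Finset.sum_congr rfl fun d hd => ?_
  have h2 : 2*d ≤ n := by have := Finset.mem_range.mp hd; omega
  have hfact : (n.choose (2*d) * ((2*d).choose d)) * ((d.factorial)^2 * (n-2*d).factorial)
      = n.factorial := by
    have A := Nat.choose_mul_factorial_mul_factorial h2
    have B := Nat.choose_mul_factorial_mul_factorial (show d ≤ 2*d by omega)
    have e : 2*d - d = d := by omega
    rw [e] at B
    rw [← A, ← B]; ring
  have hC : (n.factorial : ℂ)
      = ((n.choose (2*d) * ((2*d).choose d) : ℕ) : ℂ) * ((d.factorial:ℂ)^2 * ((n-2*d).factorial:ℂ)) := by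
    exact_mod_cast (congrArg (fun t : ℕ => (t:ℂ)) hfact).symm
  have h0 : ((d.factorial:ℂ)^2 * ((n-2*d).factorial:ℂ)) ≠ 0 :=
    mul_ne_zero (pow_ne_zero _ (Nat.cast_ne_zero.mpr (Nat.factorial_ne_zero d)))
      (Nat.cast_ne_zero.mpr (Nat.factorial_ne_zero (n-2*d)))
  have h0' : (n.factorial : ℂ) ≠ 0 := Nat.cast_ne_zero.mpr (Nat.factorial_ne_zero n)
  have hc : ((n.choose (2*d) * ((2*d).choose d) : ℕ) : ℂ) ≠ 0 :=
    Nat.cast_ne_zero.mpr (Nat.mul_ne_zero (Nat.choose_pos h2).ne' (Nat.choose_pos (by omega)).ne')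
  rw [hC]
  field_simp

/-- equation (222) of Lemma 3.1, with `v^1 = e^{u^1}(1+q e^{u^2})`
and `q e^{v^2} = q e^{2u^1+u^2}`. -/
theorem stmt3 (k : ℕ) (u1 u2 q : ℂ) :
    ∑ d ∈ Finset.range ((k + 1) / 2 + 1),
      (q * Complex.exp (2 * u1 + u2)) ^ d
        * (Complex.exp u1 * (1 + q * Complex.exp u2)) ^ (k + 1 - 2 * d)
        / ((d.factorial : ℂ) ^ 2 * ((k + 1 - 2 * d).factorial : ℂ))
    = Complex.exp (((k : ℂ) + 1) * u1) / (((k + 1).factorial : ℂ))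
        * ∑ d ∈ Finset.range (k + 2),
            (((k + 1).choose d : ℂ)) ^ 2 * (q * Complex.exp u2) ^ d := by
  have hE : Complex.exp (((k:ℂ)+1) * u1) = Complex.exp u1 ^ (k+1) := by
    rw [show ((k:ℂ)+1) = ((k+1 : ℕ) : ℂ) by push_cast; ring, Complex.exp_nat_mul]
  set x := q * Complex.exp u2 with hx
  set E := Complex.exp u1 with hEdef
  calc ∑ d ∈ Finset.range ((k + 1) / 2 + 1),
        (q * Complex.exp (2 * u1 + u2)) ^ d * (E * (1 + x)) ^ (k + 1 - 2 * d)
          / ((d.factorial : ℂ) ^ 2 * ((k + 1 - 2 * d).factorial : ℂ))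
      = ∑ d ∈ Finset.range ((k+1)/2+1),
        E ^ (k+1) * ((1+x)^(k+1-2*d) * x^d / ((d.factorial:ℂ)^2 * ((k+1-2*d).factorial:ℂ))) := by
        refine Finset.sum_congr rfl fun d hd => ?_
        have h2 : 2*d ≤ k+1 := by have := Finset.mem_range.mp hd; omega
        have h1 : q * Complex.exp (2*u1+u2) = E^2 * x := by
          rw [show (2:ℂ)*u1 + u2 = u1 + (u1 + u2) from by ring, Complex.exp_add, Complex.exp_add,
              hx, hEdef]
          ring
        have hpow : E ^ (2*d) * E ^ (k+1-2*d) = E ^ (k+1) := by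
          rw [← pow_add]; congr 1; omega
        rw [h1]
        calc (E^2 * x)^d * (E * (1+x))^(k+1-2*d) / ((d.factorial:ℂ)^2 * ((k+1-2*d).factorial:ℂ))
            = (E^(2*d) * E^(k+1-2*d)) * ((1+x)^(k+1-2*d) * x^d)
              / ((d.factorial:ℂ)^2 * ((k+1-2*d).factorial:ℂ)) := by
              rw [mul_pow (E^2) x d, mul_pow E (1+x) (k+1-2*d), ← pow_mul]; ring
          _ = E ^ (k+1) * ((1+x)^(k+1-2*d) * x^d / ((d.factorial:ℂ)^2 * ((k+1-2*d).factorial:ℂ))) := by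
              rw [hpow, mul_div_assoc]
    _ = E ^ (k+1) * ∑ d ∈ Finset.range ((k+1)/2+1),
          (1+x)^(k+1-2*d) * x^d / ((d.factorial:ℂ)^2 * ((k+1-2*d).factorial:ℂ)) := by
        rw [← Finset.mul_sum]
    _ = Complex.exp (((k : ℂ) + 1) * u1) / (((k + 1).factorial : ℂ))
        * ∑ d ∈ Finset.range (k + 2), (((k + 1).choose d : ℂ)) ^ 2 * x ^ d := by
        rw [core (k+1) x, hE]; ring
end

section
/- For every complex number w, one has A(w)^2 + 2\,C(w)B(w) - 2\,D(w)A(w) = 1, where A(w) := \sum_{d \ge 0} w^d/(d!)^2, B(w) := \sum_{d \ge 1} d\, w^d/(d!)^2, C(w) := \sum_{d \ge 1} H_d\, w^d/(d!)^2, and D(w) := \sum_{d \ge 1} d\,H_d\, w^d/(d!)^2 (all series are entire). -/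
/-- The `m`-th harmonic number `H_m = ∑_{j=1}^m 1/j` as a complex number. -/
noncomputable def Hc (m : ℕ) : ℂ := ∑ j ∈ Finset.range m, 1 / ((j : ℂ) + 1)

open Finset

noncomputable def sA (w : ℂ) (d : ℕ) : ℂ := w ^ d / ((d.factorial : ℂ)) ^ 2
noncomputable def sB (w : ℂ) (d : ℕ) : ℂ := (d : ℂ) * w ^ d / ((d.factorial : ℂ)) ^ 2
noncomputable def sC (w : ℂ) (d : ℕ) : ℂ := Hc d * w ^ d / ((d.factorial : ℂ)) ^ 2
noncomputable def sD (w : ℂ) (d : ℕ) : ℂ := (d : ℂ) * Hc d * w ^ d / ((d.factorial : ℂ)) ^ 2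

lemma Hc_succ (k : ℕ) : Hc (k + 1) = Hc k + 1 / ((k : ℂ) + 1) := by
  rw [Hc, Finset.sum_range_succ]; rfl

lemma Hc_norm_le (m : ℕ) : ‖Hc m‖ ≤ m := by
  calc ‖Hc m‖ ≤ ∑ j ∈ range m, ‖(1 : ℂ) / ((j : ℂ) + 1)‖ := norm_sum_le _ _
  _ ≤ ∑ _j ∈ range m, (1 : ℝ) := by
      refine Finset.sum_le_sum fun j _ => ?_
      have h : ((j : ℂ) + 1) = ((j + 1 : ℕ) : ℂ) := by push_cast; ring
      rw [norm_div, norm_one, h, Complex.norm_natCast]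
      rw [div_le_one (by positivity)]
      exact_mod_cast Nat.succ_le_succ (Nat.zero_le j)
  _ = m := by simp

/-- Master summability lemma. -/
lemma summable_aux (w : ℂ) (u : ℕ → ℂ) (hu : ∀ d, ‖u d‖ ≤ ((d : ℝ) + 1) ^ 2) :
    Summable fun d => ‖u d * w ^ d / ((d.factorial : ℂ)) ^ 2‖ := by
  refine Summable.of_nonneg_of_le (fun d => norm_nonneg _) (fun d => ?_)
    (Real.summable_pow_div_factorial (4 * ‖w‖))
  have hfac : (0 : ℝ) < (d.factorial : ℝ) := by exact_mod_cast d.factorial_pos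
  have hstep1 : ‖u d * w ^ d / ((d.factorial : ℂ)) ^ 2‖
      = ‖u d‖ * ‖w‖ ^ d / ((d.factorial : ℝ)) ^ 2 := by
    rw [norm_div, norm_mul, norm_pow, norm_pow, Complex.norm_natCast]
  rw [hstep1]
  have h1 : ((d : ℝ) + 1) ^ 2 ≤ 4 ^ d := by
    have : d + 1 ≤ 2 ^ d := Nat.succ_le_of_lt (Nat.lt_two_pow_self : d < 2 ^ d)
    have h2 : ((d : ℝ) + 1) ≤ 2 ^ d := by exact_mod_cast this
    calc ((d : ℝ) + 1) ^ 2 ≤ ((2 : ℝ) ^ d) ^ 2 := by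
          apply pow_le_pow_left₀ (by positivity) h2
      _ = 4 ^ d := by rw [← pow_mul, mul_comm, pow_mul]; norm_num
  have h2 : ((d.factorial : ℝ)) ≤ ((d.factorial : ℝ)) ^ 2 := by
    nlinarith [show (1:ℝ) ≤ (d.factorial : ℝ) by exact_mod_cast d.factorial_pos]
  calc ‖u d‖ * ‖w‖ ^ d / ((d.factorial : ℝ)) ^ 2
      ≤ (((d : ℝ) + 1) ^ 2 * ‖w‖ ^ d) / ((d.factorial : ℝ)) ^ 2 := by
        apply div_le_div_of_nonneg_right _ (by positivity)
        exact mul_le_mul_of_nonneg_right (hu d) (by positivity)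
    _ ≤ (4 ^ d * ‖w‖ ^ d) / ((d.factorial : ℝ)) := by
        rw [div_le_div_iff₀ (by positivity) hfac]
        have : (0:ℝ) ≤ ‖w‖ ^ d := by positivity
        nlinarith [mul_le_mul_of_nonneg_right h1 this,
          mul_le_mul_of_nonneg_left h2 (mul_nonneg (by positivity : (0:ℝ) ≤ (4:ℝ)^d) this)]
    _ = (4 * ‖w‖) ^ d / (d.factorial : ℝ) := by rw [mul_pow]

lemma summable_sA (w : ℂ) : Summable fun d => ‖sA w d‖ := by
  have := summable_aux w (fun _ => 1) (fun d => by
    rw [norm_one]; nlinarith [Nat.cast_nonneg (α := ℝ) d])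
  simpa [sA, one_mul] using this

lemma summable_sB (w : ℂ) : Summable fun d => ‖sB w d‖ := by
  refine summable_aux w (fun d => (d : ℂ)) (fun d => ?_)
  rw [Complex.norm_natCast]
  nlinarith [Nat.cast_nonneg (α := ℝ) d]

lemma summable_sC (w : ℂ) : Summable fun d => ‖sC w d‖ := by
  refine summable_aux w (fun d => Hc d) (fun d => ?_)
  have := Hc_norm_le d
  nlinarith [Nat.cast_nonneg (α := ℝ) d]

lemma summable_sD (w : ℂ) : Summable fun d => ‖sD w d‖ := by
  refine summable_aux w (fun d => (d : ℂ) * Hc d) (fun d => ?_)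
  rw [norm_mul, Complex.norm_natCast]
  have h1 := Hc_norm_le d
  have h2 : (0:ℝ) ≤ (d:ℝ) := Nat.cast_nonneg d
  nlinarith [norm_nonneg (Hc d)]

/-- The telescoping witness. -/
noncomputable def gW (n k : ℕ) : ℂ :=
  (n.choose k : ℂ) ^ 2 *
    (2 * (k : ℂ) ^ 2 * Hc k / (n : ℂ) - (k : ℂ) * (2 * (n : ℂ) - (k : ℂ)) / ((n : ℂ)) ^ 2)

lemma step_eq (n k : ℕ) (hn : n ≠ 0) (hk : k ≤ n) :
    (n.choose k : ℂ) ^ 2 * (1 + 2 * Hc k * ((n : ℂ) - 2 * k)) = gW n (k + 1) - gW n k := by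
  have hkc : ((k : ℂ) + 1) ≠ 0 := by
    have : ((k : ℂ) + 1) = ((k + 1 : ℕ) : ℂ) := by push_cast; ring
    rw [this]; exact_mod_cast Nat.succ_ne_zero k
  have hnc : ((n : ℂ)) ≠ 0 := Nat.cast_ne_zero.mpr hn
  have hrec : (n.choose (k + 1) : ℂ) * ((k : ℂ) + 1) = (n.choose k : ℂ) * ((n : ℂ) - (k : ℂ)) := by
    have h := Nat.choose_succ_right_eq n k
    have h2 : ((n.choose (k+1) * (k+1) : ℕ) : ℂ) = ((n.choose k * (n - k) : ℕ) : ℂ) := by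
      exact_mod_cast congrArg (Nat.cast : ℕ → ℂ) h
    push_cast [Nat.cast_sub hk] at h2
    linear_combination h2
  have hsq : (n.choose (k + 1) : ℂ) ^ 2 * ((k : ℂ) + 1) ^ 2
      = (n.choose k : ℂ) ^ 2 * ((n : ℂ) - (k : ℂ)) ^ 2 := by
    linear_combination ((n.choose (k + 1) : ℂ) * ((k : ℂ) + 1)
      + (n.choose k : ℂ) * ((n : ℂ) - (k : ℂ))) * hrec
  have hG1 : gW n (k + 1) = (n.choose k : ℂ) ^ 2 * ((n : ℂ) - (k : ℂ)) ^ 2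
      * (2 * (n : ℂ) * Hc k + 1) / (n : ℂ) ^ 2 := by
    unfold gW
    push_cast
    rw [Hc_succ, ← hsq]
    field_simp
    ring
  rw [hG1]
  unfold gW
  field_simp
  ring

lemma comb_key (n : ℕ) (hn : n ≠ 0) :
    ∑ k ∈ range (n + 1), (n.choose k : ℂ) ^ 2 * (1 + 2 * Hc k * ((n : ℂ) - 2 * k)) = 0 := by
  have h1 : ∑ k ∈ range (n + 1), (n.choose k : ℂ) ^ 2 * (1 + 2 * Hc k * ((n : ℂ) - 2 * k))
      = ∑ k ∈ range (n + 1), (gW n (k + 1) - gW n k) := by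
    refine Finset.sum_congr rfl fun k hk => ?_
    exact step_eq n k hn (Nat.lt_succ_iff.mp (Finset.mem_range.mp hk))
  rw [h1, Finset.sum_range_sub (gW n)]
  have h2 : gW n (n + 1) = 0 := by
    unfold gW
    rw [Nat.choose_succ_self]
    push_cast
    ring
  have h3 : gW n 0 = 0 := by unfold gW; push_cast; ring
  rw [h2, h3, sub_zero]

lemma term_eq (w : ℂ) (n k : ℕ) (hk : k ≤ n) :
    sA w k * sA w (n - k) + 2 * (sC w k * sB w (n - k)) - 2 * (sD w k * sA w (n - k))
      = w ^ n / ((n.factorial : ℂ)) ^ 2 *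
          ((n.choose k : ℂ) ^ 2 * (1 + 2 * Hc k * ((n : ℂ) - 2 * k))) := by
  have hw : w ^ k * w ^ (n - k) = w ^ n := by
    rw [← pow_add, Nat.add_sub_cancel' hk]
  have hnk : (((n - k : ℕ)) : ℂ) = (n : ℂ) - (k : ℂ) := by
    push_cast [Nat.cast_sub hk]; ring
  have hfac : ((n.factorial : ℂ)) = (n.choose k : ℂ) * (k.factorial : ℂ)
      * (((n - k).factorial : ℂ)) := by
    exact_mod_cast congrArg (Nat.cast : ℕ → ℂ) (Nat.choose_mul_factorial_mul_factorial hk).symm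
  have hk0 : ((k.factorial : ℂ)) ≠ 0 := Nat.cast_ne_zero.mpr k.factorial_ne_zero
  have hnk0 : (((n - k).factorial : ℂ)) ≠ 0 := Nat.cast_ne_zero.mpr (n - k).factorial_ne_zero
  have hc0 : ((n.choose k : ℕ) : ℂ) ≠ 0 :=
    Nat.cast_ne_zero.mpr (Nat.choose_pos hk).ne'
  unfold sA sB sC sD
  rw [hnk, hfac, ← hw]
  field_simp
  ring

lemma key_n (w : ℂ) (n : ℕ) :
    (∑ kl ∈ antidiagonal n, sA w kl.1 * sA w kl.2)
      + 2 * (∑ kl ∈ antidiagonal n, sC w kl.1 * sB w kl.2)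
      - 2 * (∑ kl ∈ antidiagonal n, sD w kl.1 * sA w kl.2)
      = if n = 0 then 1 else 0 := by
  rcases Nat.eq_zero_or_pos n with hn | hn
  · subst hn
    simp [Finset.Nat.antidiagonal_zero, sA, sB, sC, sD, Hc]
  · have hn0 : n ≠ 0 := hn.ne'
    rw [if_neg hn0]
    rw [Finset.Nat.sum_antidiagonal_eq_sum_range_succ_mk,
      Finset.Nat.sum_antidiagonal_eq_sum_range_succ_mk,
      Finset.Nat.sum_antidiagonal_eq_sum_range_succ_mk,
      Finset.mul_sum, Finset.mul_sum, ← Finset.sum_add_distrib, ← Finset.sum_sub_distrib]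
    have h1 : ∀ k ∈ range (n + 1),
        sA w k * sA w (n - k) + 2 * (sC w k * sB w (n - k)) - 2 * (sD w k * sA w (n - k))
          = w ^ n / ((n.factorial : ℂ)) ^ 2 *
              ((n.choose k : ℂ) ^ 2 * (1 + 2 * Hc k * ((n : ℂ) - 2 * k))) := fun k hk =>
      term_eq w n k (Nat.lt_succ_iff.mp (Finset.mem_range.mp hk))
    rw [Finset.sum_congr rfl h1, ← Finset.mul_sum, comb_key n hn0, mul_zero]

/-- the Wronskian-type identity `A(w)² + 2C(w)B(w) - 2D(w)A(w) = 1`,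
where `A(w) = ∑_{d≥0} w^d/(d!)²`, `B(w) = ∑_{d≥1} d w^d/(d!)²`,
`C(w) = ∑_{d≥1} H_d w^d/(d!)²`, `D(w) = ∑_{d≥1} d H_d w^d/(d!)²`. -/
theorem stmt9 (w : ℂ) :
    (∑' d : ℕ, w ^ d / ((d.factorial : ℂ)) ^ 2) ^ 2
      + 2 * (∑' d : ℕ, Hc d * w ^ d / ((d.factorial : ℂ)) ^ 2)
          * (∑' d : ℕ, (d : ℂ) * w ^ d / ((d.factorial : ℂ)) ^ 2)
      - 2 * (∑' d : ℕ, (d : ℂ) * Hc d * w ^ d / ((d.factorial : ℂ)) ^ 2)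
          * (∑' d : ℕ, w ^ d / ((d.factorial : ℂ)) ^ 2) = 1 := by
  have hA := summable_sA w
  have hB := summable_sB w
  have hC := summable_sC w
  have hD := summable_sD w
  have eA : (∑' d : ℕ, w ^ d / ((d.factorial : ℂ)) ^ 2) = ∑' d, sA w d := rfl
  have eB : (∑' d : ℕ, (d : ℂ) * w ^ d / ((d.factorial : ℂ)) ^ 2) = ∑' d, sB w d := rfl
  have eC : (∑' d : ℕ, Hc d * w ^ d / ((d.factorial : ℂ)) ^ 2) = ∑' d, sC w d := rfl
  have eD : (∑' d : ℕ, (d : ℂ) * Hc d * w ^ d / ((d.factorial : ℂ)) ^ 2) = ∑' d, sD w d := rfl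
  rw [eA, eB, eC, eD, sq, mul_assoc 2, mul_assoc 2]
  rw [tsum_mul_tsum_eq_tsum_sum_antidiagonal_of_summable_norm hA hA,
    tsum_mul_tsum_eq_tsum_sum_antidiagonal_of_summable_norm hC hB,
    tsum_mul_tsum_eq_tsum_sum_antidiagonal_of_summable_norm hD hA]
  have sAA := (summable_norm_sum_mul_antidiagonal_of_summable_norm hA hA).of_norm
  have sCB := (summable_norm_sum_mul_antidiagonal_of_summable_norm hC hB).of_norm
  have sDA := (summable_norm_sum_mul_antidiagonal_of_summable_norm hD hA).of_norm
  rw [← tsum_mul_left (a := (2:ℂ)), ← tsum_mul_left (a := (2:ℂ)),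
    ← Summable.tsum_add sAA (sCB.mul_left 2), ← Summable.tsum_sub (sAA.add (sCB.mul_left 2)) (sDA.mul_left 2)]
  have : ∀ n : ℕ, ((∑ kl ∈ antidiagonal n, sA w kl.1 * sA w kl.2)
      + 2 * (∑ kl ∈ antidiagonal n, sC w kl.1 * sB w kl.2))
      - 2 * (∑ kl ∈ antidiagonal n, sD w kl.1 * sA w kl.2)
      = if n = 0 then (1:ℂ) else 0 := fun n => by
    have := key_n w n
    linear_combination this
  rw [tsum_congr this]
  exact tsum_ite_eq 0 (fun _ => (1 : ℂ))
end

section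
/- Fix integers k, \ell \ge 0 and complex numbers u^1, u^2, q. Let v^1(u) = e^{u^1}(1+q e^{u^2}), v^2(u) = 2u^1+u^2, let \theta_{2,m}(v^1,v^2) := \sum_{d=0}^{\lfloor (m+1)/2 \rfloor} q^d e^{d v^2} (v^1)^{m+1-2d}/((d!)^2 (m+1-2d)!), and let \Theta_n(u^1,u^2) := n^{-1}\big(e^{n u^1} \sum_{d=0}^{n} \binom{n}{d}^2 (q e^{u^2})^d - 1\big). Then \Big[ 2 q e^{v^2}\, \partial_{v^1}\theta_{2,k}\, \partial_{v^1}\theta_{2,\ell} + v^1\big( \partial_{v^1}\theta_{2,k}\, \partial_{v^2}\theta_{2,\ell} + \partial_{v^2}\theta_{2,k}\, \partial_{v^1}\theta_{2,\ell} \big) + 2\, \partial_{v^2}\theta_{2,k}\, \partial_{v^2}\theta_{2,\ell} \Big]\Big|_{v = v(u)} = \frac{1}{k!\,\ell!} \Big[ \partial_{u^1}\Theta_{k+1}\, \partial_{u^2}\Theta_{\ell+1} + \partial_{u^2}\Theta_{k+1}\, \partial_{u^1}\Theta_{\ell+1} - 2\, \partial_{u^2}\Theta_{k+1}\, \partial_{u^2}\Theta_{\ell+1}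 \Big]. -/
open Finset Polynomial

/-- `θ^{P1}_{2,m}(v¹,v²;q)`. -/
noncomputable def theta2P1 (m : ℕ) (q v1 v2 : ℂ) : ℂ :=
  ∑ d ∈ Finset.range ((m + 1) / 2 + 1),
    q ^ d * Complex.exp ((d : ℂ) * v2) * v1 ^ (m + 1 - 2 * d)
      / ((d.factorial : ℂ) ^ 2 * ((m + 1 - 2 * d).factorial : ℂ))

/-- `Θ_n(u) = n⁻¹ (e^{n u¹} ∑_{d=0}^n (n choose d)² (q e^{u²})^d - 1)`. -/
noncomputable def ThetaDi (n : ℕ) (q u1 u2 : ℂ) : ℂ :=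
  (n : ℂ)⁻¹ * (Complex.exp ((n : ℂ) * u1)
    * ∑ d ∈ Finset.range (n + 1), ((n.choose d : ℂ)) ^ 2 * (q * Complex.exp u2) ^ d - 1)


lemma vand (n e : ℕ) (he : e ≤ n) :
    ∑ d ∈ range (e+1), e.choose d * (n-e).choose d = n.choose e := by
  have h := Nat.add_choose_eq e (n-e) e
  rw [Finset.Nat.sum_antidiagonal_eq_sum_range_succ_mk] at h
  rw [show e + (n-e) = n by omega] at h
  rw [h]
  rw [← Finset.sum_range_reflect]
  apply Finset.sum_congr rfl
  intro d hd
  simp only [Finset.mem_range] at hd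
  rw [show e + 1 - 1 - d = e - d by omega, Nat.choose_symm (by omega)]

lemma choose_id (n e d : ℕ) (hd : d ≤ e) (he : e ≤ n) :
    ((n.choose d : ℂ)) * ((n-d).choose d : ℂ) * ((n-2*d).choose (e-d) : ℂ)
      = (n.choose e : ℂ) * ((e.choose d : ℂ) * ((n-e).choose d : ℂ)) := by
  by_cases h : d + e ≤ n
  · rw [Nat.cast_choose ℂ (show d ≤ n by omega), Nat.cast_choose ℂ (show d ≤ n-d by omega),
      Nat.cast_choose ℂ (show e-d ≤ n-2*d by omega), Nat.cast_choose ℂ he,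
      Nat.cast_choose ℂ hd, Nat.cast_choose ℂ (show d ≤ n-e by omega)]
    rw [show n-d-d = n-2*d by omega, show n-2*d-(e-d) = n-(d+e) by omega,
      show n-e-d = n-(d+e) by omega]
    have f1 : (Nat.factorial d : ℂ) ≠ 0 := Nat.cast_ne_zero.2 (Nat.factorial_ne_zero d)
    have f2 : (Nat.factorial (e-d) : ℂ) ≠ 0 := Nat.cast_ne_zero.2 (Nat.factorial_ne_zero _)
    have f3 : (Nat.factorial (n-(d+e)) : ℂ) ≠ 0 := Nat.cast_ne_zero.2 (Nat.factorial_ne_zero _)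
    have f4 : (Nat.factorial (n-d) : ℂ) ≠ 0 := Nat.cast_ne_zero.2 (Nat.factorial_ne_zero _)
    have f5 : (Nat.factorial (n-2*d) : ℂ) ≠ 0 := Nat.cast_ne_zero.2 (Nat.factorial_ne_zero _)
    have f6 : (Nat.factorial e : ℂ) ≠ 0 := Nat.cast_ne_zero.2 (Nat.factorial_ne_zero _)
    have f7 : (Nat.factorial (n-e) : ℂ) ≠ 0 := Nat.cast_ne_zero.2 (Nat.factorial_ne_zero _)
    field_simp
  · by_cases h2 : 2*d ≤ n
    · rw [Nat.choose_eq_zero_of_lt (show n-2*d < e-d by omega),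
        Nat.choose_eq_zero_of_lt (show n-e < d by omega)]
      push_cast; ring
    · rw [Nat.choose_eq_zero_of_lt (show n-d < d by omega),
        Nat.choose_eq_zero_of_lt (show n-e < d by omega)]
      push_cast; ring

lemma sum3 (n e : ℕ) (he : e ≤ n) :
    ∑ d ∈ range (e+1), ((n.choose d : ℂ)) * ((n-d).choose d : ℂ) * ((n-2*d).choose (e-d) : ℂ)
      = ((n.choose e : ℂ))^2 := by
  have : ∀ d ∈ range (e+1), ((n.choose d : ℂ)) * ((n-d).choose d : ℂ) * ((n-2*d).choose (e-d) : ℂ)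
      = (n.choose e : ℂ) * ((e.choose d : ℂ) * ((n-e).choose d : ℂ)) := by
    intro d hd; exact choose_id n e d (by simpa using Nat.lt_succ_iff.mp (Finset.mem_range.mp hd)) he
  rw [Finset.sum_congr rfl this, ← Finset.mul_sum]
  have := vand n e he
  have hc := congrArg (Nat.cast : ℕ → ℂ) this
  push_cast at hc
  rw [hc]; ring

lemma key_poly (n : ℕ) :
    (∑ d ∈ range (n+1), Polynomial.C ((n.choose d : ℂ) * ((n-d).choose d : ℂ))
        * (X^d * (1+X)^(n-2*d)))
      = ∑ e ∈ range (n+1), Polynomial.C ((n.choose e : ℂ)^2) * X^e := by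
  apply Polynomial.ext
  intro m
  rw [Polynomial.finset_sum_coeff, Polynomial.finset_sum_coeff]
  have hL : ∀ d, (Polynomial.C ((n.choose d : ℂ) * ((n-d).choose d : ℂ))
      * (X^d * (1+X)^(n-2*d)) : ℂ[X]).coeff m
      = if d ≤ m then (n.choose d : ℂ) * ((n-d).choose d : ℂ) * ((n-2*d).choose (m-d) : ℂ)
        else 0 := by
    intro d
    rw [Polynomial.coeff_C_mul, X_pow_mul, Polynomial.coeff_mul_X_pow',
      Polynomial.coeff_one_add_X_pow]
    split_ifs with h
    · ring
    · ring
  have hR : ∀ e, (Polynomial.C ((n.choose e : ℂ)^2) * X^e : ℂ[X]).coeff m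
      = if m = e then ((n.choose e : ℂ))^2 else 0 := by
    intro e
    rw [Polynomial.coeff_C_mul, Polynomial.coeff_X_pow]
    split_ifs <;> ring
  rw [Finset.sum_congr rfl (fun d _ => hL d), Finset.sum_congr rfl (fun e _ => hR e)]
  rw [Finset.sum_ite_eq (range (n+1)) m (fun e => ((n.choose e : ℂ))^2)]
  by_cases hm : m ≤ n
  · rw [if_pos (Finset.mem_range.mpr (by omega))]
    rw [← sum3 n m hm]
    rw [← Finset.sum_subset (Finset.range_subset_range.mpr (show m+1 ≤ n+1 by omega))]
    · exact Finset.sum_congr rfl (fun d hd => if_pos (by simpa using Nat.lt_succ_iff.mp (Finset.mem_range.mp hd)))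
    · intro d _ hd2
      rw [if_neg (by simp at hd2 ⊢; omega)]
  · rw [if_neg (by simp; omega)]
    apply Finset.sum_eq_zero
    intro d hd
    simp only [Finset.mem_range] at hd
    split_ifs with h
    · by_cases h2 : 2*d ≤ n
      · rw [Nat.choose_eq_zero_of_lt (show n - 2*d < m - d by omega)]; ring
      · rw [Nat.choose_eq_zero_of_lt (show n - d < d by omega)]; ring
    · rfl

lemma key1 (n : ℕ) (B : ℂ) :
    ∑ d ∈ range (n+1), ((n.choose d : ℂ)) * ((n-d).choose d : ℂ) * (B^d * (1+B)^(n-2*d))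
      = ∑ e ∈ range (n+1), ((n.choose e : ℂ))^2 * B^e := by
  have h := congrArg (Polynomial.eval B) (key_poly n)
  rw [Polynomial.eval_finset_sum, Polynomial.eval_finset_sum] at h
  simpa [mul_assoc] using h

lemma fact_cast_ne (j : ℕ) : ((j.factorial : ℂ)) ≠ 0 :=
  Nat.cast_ne_zero.2 (Nat.factorial_ne_zero j)

lemma coef_conv (n d : ℕ) (h : 2*d ≤ n) :
    ((n.factorial : ℂ)) / ((d.factorial : ℂ)^2 * ((n-2*d).factorial : ℂ))
      = ((n.choose d : ℂ)) * ((n-d).choose d : ℂ) := by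
  have h1 : (n-d).choose d * d.factorial * (n-2*d).factorial = (n-d).factorial := by
    have := Nat.choose_mul_factorial_mul_factorial (show d ≤ n-d by omega)
    rwa [show n-d-d = n-2*d by omega] at this
  have h2 : n.choose d * d.factorial * (n-d).factorial = n.factorial :=
    Nat.choose_mul_factorial_mul_factorial (by omega)
  have c1 := congrArg (Nat.cast : ℕ → ℂ) h1
  have c2 := congrArg (Nat.cast : ℕ → ℂ) h2
  push_cast at c1 c2
  rw [div_eq_iff (mul_ne_zero (pow_ne_zero _ (fact_cast_ne _)) (fact_cast_ne _))]
  linear_combination (-1 : ℂ)*c2 - ((n.choose d : ℂ) * (d.factorial:ℂ))*c1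

/-- `n! · Φ_n(B) = ∑ C(n,e)² Bᵉ`. -/
lemma keyF (n : ℕ) (B : ℂ) :
    (n.factorial : ℂ) * ∑ d ∈ range (n/2+1),
        B^d * (1+B)^(n-2*d) / ((d.factorial : ℂ)^2 * ((n-2*d).factorial : ℂ))
      = ∑ e ∈ range (n+1), ((n.choose e : ℂ))^2 * B^e := by
  rw [Finset.mul_sum, ← key1 n B]
  rw [← Finset.sum_subset (Finset.range_subset_range.mpr (show n/2+1 ≤ n+1 by omega))]
  · apply Finset.sum_congr rfl
    intro d hd
    have h2 : 2*d ≤ n := by have := Finset.mem_range.mp hd; omega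
    rw [← coef_conv n d h2]
    field_simp [fact_cast_ne]
  · intro d hd hd2
    rw [Nat.choose_eq_zero_of_lt (show n-d < d by simp at hd hd2; omega)]
    push_cast; ring

/-- derivative of `Φ_n` -/
lemma hasDeriv_Phi (n : ℕ) (B : ℂ) :
    HasDerivAt (fun B => ∑ d ∈ range (n/2+1),
        B^d * (1+B)^(n-2*d) / ((d.factorial : ℂ)^2 * ((n-2*d).factorial : ℂ)))
      (∑ d ∈ range (n/2+1),
        ((d:ℂ) * B^(d-1) * (1+B)^(n-2*d)
          + B^d * (((n-2*d:ℕ):ℂ) * (1+B)^(n-2*d-1) * 1))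
          / ((d.factorial : ℂ)^2 * ((n-2*d).factorial : ℂ))) B := by
  apply HasDerivAt.fun_sum
  intro d _
  exact ((hasDerivAt_pow d B).mul (((hasDerivAt_id B).const_add 1).pow (n-2*d))).div_const _

lemma hasDeriv_Psi (n : ℕ) (B : ℂ) :
    HasDerivAt (fun B => ∑ e ∈ range (n+1), ((n.choose e : ℂ))^2 * B^e)
      (∑ e ∈ range (n+1), ((n.choose e : ℂ))^2 * ((e:ℂ) * B^(e-1))) B := by
  apply HasDerivAt.fun_sum
  intro e _
  exact (hasDerivAt_pow e B).const_mul _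

lemma key2 (n : ℕ) (B : ℂ) :
    (n.factorial : ℂ) * ∑ d ∈ range (n/2+1),
        ((d:ℂ) * B^(d-1) * (1+B)^(n-2*d)
          + B^d * (((n-2*d:ℕ):ℂ) * (1+B)^(n-2*d-1) * 1))
          / ((d.factorial : ℂ)^2 * ((n-2*d).factorial : ℂ))
      = ∑ e ∈ range (n+1), ((n.choose e : ℂ))^2 * ((e:ℂ) * B^(e-1)) := by
  have hf : (fun B => (n.factorial : ℂ) * ∑ d ∈ range (n/2+1),
        B^d * (1+B)^(n-2*d) / ((d.factorial : ℂ)^2 * ((n-2*d).factorial : ℂ)))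
      = (fun B => ∑ e ∈ range (n+1), ((n.choose e : ℂ))^2 * B^e) := funext (keyF n)
  have h1 := ((hasDeriv_Phi n B).const_mul ((n.factorial : ℂ))).deriv
  have h2 := (hasDeriv_Psi n B).deriv
  rw [← h1, ← h2, hf]

lemma deriv_theta_x (m : ℕ) (q v2 x : ℂ) :
    deriv (fun x => theta2P1 m q x v2) x
      = ∑ d ∈ range ((m+1)/2+1),
          q ^ d * Complex.exp ((d:ℂ) * v2) * (((m+1-2*d : ℕ):ℂ) * x ^ (m+1-2*d-1))
            / ((d.factorial : ℂ)^2 * ((m+1-2*d).factorial : ℂ)) := by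
  have H : HasDerivAt (fun x => theta2P1 m q x v2)
      (∑ d ∈ range ((m+1)/2+1),
        q ^ d * Complex.exp ((d:ℂ) * v2) * (((m+1-2*d : ℕ):ℂ) * x ^ (m+1-2*d-1))
          / ((d.factorial : ℂ)^2 * ((m+1-2*d).factorial : ℂ))) x := by
    apply HasDerivAt.fun_sum
    intro d _
    exact ((hasDerivAt_pow (m+1-2*d) x).const_mul (q ^ d * Complex.exp ((d:ℂ) * v2))).div_const _
  exact H.deriv

lemma deriv_theta_y (m : ℕ) (q x v2 : ℂ) :
    deriv (fun y => theta2P1 m q x y) v2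
      = ∑ d ∈ range ((m+1)/2+1),
          q ^ d * (d:ℂ) * Complex.exp ((d:ℂ) * v2) * x ^ (m+1-2*d)
            / ((d.factorial : ℂ)^2 * ((m+1-2*d).factorial : ℂ)) := by
  have H : HasDerivAt (fun y => theta2P1 m q x y)
      (∑ d ∈ range ((m+1)/2+1),
        q ^ d * (Complex.exp ((d:ℂ) * v2) * ((d:ℂ) * 1)) * x ^ (m+1-2*d)
          / ((d.factorial : ℂ)^2 * ((m+1-2*d).factorial : ℂ))) v2 := by
    apply HasDerivAt.fun_sum
    intro d _
    exact (((((hasDerivAt_id v2).const_mul (d:ℂ)).cexp).const_mul (q ^ d)).mul_const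
      (x ^ (m+1-2*d))).div_const _
  rw [H.deriv]
  exact Finset.sum_congr rfl (fun d _ => by ring)

lemma deriv_Theta_x (n : ℕ) (hn : n ≠ 0) (q u1 u2 : ℂ) :
    deriv (fun x => ThetaDi n q x u2) u1
      = Complex.exp ((n:ℂ) * u1)
          * ∑ d ∈ range (n+1), ((n.choose d : ℂ))^2 * (q * Complex.exp u2) ^ d := by
  have H : HasDerivAt (fun x => ThetaDi n q x u2)
      ((n:ℂ)⁻¹ * (Complex.exp ((n:ℂ) * u1) * ((n:ℂ) * 1)
        * ∑ d ∈ range (n+1), ((n.choose d : ℂ))^2 * (q * Complex.exp u2) ^ d)) u1 := by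
    exact (((((hasDerivAt_id u1).const_mul (n:ℂ)).cexp).mul_const _).sub_const 1).const_mul _
  rw [H.deriv]
  have : (n:ℂ) ≠ 0 := Nat.cast_ne_zero.mpr hn
  field_simp

lemma deriv_Theta_y (n : ℕ) (q u1 u2 : ℂ) :
    deriv (fun y => ThetaDi n q u1 y) u2
      = (n:ℂ)⁻¹ * Complex.exp ((n:ℂ) * u1)
          * ∑ d ∈ range (n+1), (d:ℂ) * ((n.choose d : ℂ))^2 * (q * Complex.exp u2) ^ d := by
  have H : HasDerivAt (fun y => ThetaDi n q u1 y)
      ((n:ℂ)⁻¹ * (Complex.exp ((n:ℂ) * u1)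
        * ∑ d ∈ range (n+1), ((n.choose d : ℂ))^2
            * ((d:ℂ) * (q * Complex.exp u2) ^ (d-1) * (q * Complex.exp u2)))) u2 := by
    apply HasDerivAt.const_mul
    apply HasDerivAt.sub_const
    apply HasDerivAt.const_mul
    apply HasDerivAt.fun_sum
    intro d _
    exact (((Complex.hasDerivAt_exp u2).const_mul q).pow d).const_mul _
  rw [H.deriv]
  simp only [Finset.mul_sum]
  apply Finset.sum_congr rfl
  intro d _
  rcases d with _ | d
  · simp
  · rw [show (d+1) - 1 = d from rfl, pow_succ]
    push_cast
    ring

lemma pow_pred_mul (X : ℂ) (d : ℕ) : (d:ℂ) * X^(d-1) * X = (d:ℂ) * X^d := by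
  rcases d with _|d
  · simp
  · rw [Nat.add_sub_cancel]; ring

lemma exp_fact (q u1 u2 : ℂ) (d : ℕ) :
    q^d * Complex.exp ((d:ℂ) * (2*u1+u2))
      = (Complex.exp u1)^(2*d) * (q * Complex.exp u2)^d := by
  have h : (d:ℂ) * (2*u1+u2) = ((2*d : ℕ):ℂ)*u1 + ((d:ℕ):ℂ)*u2 := by push_cast; ring
  rw [h, Complex.exp_add, Complex.exp_nat_mul, Complex.exp_nat_mul, mul_pow]
  ring

lemma hSa (m : ℕ) (q u1 u2 : ℂ) :
    deriv (fun x => theta2P1 m q x (2*u1+u2)) (Complex.exp u1 * (1 + q * Complex.exp u2))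
      = ∑ d ∈ Finset.range ((m+1)/2+1),
          (Complex.exp u1)^(2*d) * (q*Complex.exp u2)^d
            * ((((m+1-2*d:ℕ)):ℂ) * (Complex.exp u1 * (1 + q*Complex.exp u2))^(m+1-2*d-1))
            / ((d.factorial:ℂ)^2*((m+1-2*d).factorial:ℂ)) := by
  rw [deriv_theta_x]
  exact Finset.sum_congr rfl (fun d _ => by rw [exp_fact])

lemma hSb (m : ℕ) (q u1 u2 : ℂ) :
    deriv (fun y => theta2P1 m q (Complex.exp u1 * (1 + q*Complex.exp u2)) y) (2*u1+u2)
      = ∑ d ∈ Finset.range ((m+1)/2+1),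
          (Complex.exp u1)^(2*d) * (q*Complex.exp u2)^d * (d:ℂ)
            * (Complex.exp u1 * (1 + q*Complex.exp u2))^(m+1-2*d)
            / ((d.factorial:ℂ)^2*((m+1-2*d).factorial:ℂ)) := by
  rw [deriv_theta_y]
  refine Finset.sum_congr rfl (fun d _ => ?_)
  linear_combination ((d:ℂ) * (Complex.exp u1 * (1+q*Complex.exp u2))^(m+1-2*d)
    / ((d.factorial:ℂ)^2*((m+1-2*d).factorial:ℂ))) * exp_fact q u1 u2 d

lemma R1 (m : ℕ) (q u1 u2 : ℂ) :
    deriv (fun x => ThetaDi (m+1) q x u2) u1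
      = (m.factorial : ℂ) *
        ((Complex.exp u1 * (1 + q * Complex.exp u2))
            * deriv (fun x => theta2P1 m q x (2*u1+u2)) (Complex.exp u1 * (1 + q * Complex.exp u2))
          + 2 * deriv (fun y => theta2P1 m q (Complex.exp u1 * (1 + q * Complex.exp u2)) y) (2*u1+u2)) := by
  rw [deriv_Theta_x (m+1) (Nat.succ_ne_zero m) q u1 u2, hSa, hSb,
    ← keyF (m+1) (q * Complex.exp u2), Complex.exp_nat_mul, mul_add ((m.factorial:ℕ):ℂ)]
  simp only [Finset.mul_sum]
  rw [← Finset.sum_add_distrib]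
  apply Finset.sum_congr rfl
  intro d hd
  have h2 : 2*d ≤ m+1 := by
    have := Finset.mem_range.mp hd
    omega
  have hfact : (((m+1).factorial : ℕ):ℂ) = ((m+1:ℕ):ℂ) * ((m.factorial : ℕ):ℂ) := by
    rw [Nat.factorial_succ]; push_cast; ring
  rw [hfact]
  rcases Nat.eq_zero_or_pos (m+1-2*d) with h0 | hpos
  · have hm1 : m + 1 = 2*d := by omega
    rw [h0, hm1]
    simp only [Nat.zero_sub, pow_zero, Nat.factorial_zero, Nat.cast_zero]
    push_cast
    simp only [mul_pow]
    ring
  · obtain ⟨M, hM⟩ : ∃ M, m+1-2*d = M+1 := ⟨m-2*d, by omega⟩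
    have hn : m + 1 = 2*d + (M+1) := by omega
    rw [hM]
    simp only [Nat.add_sub_cancel]
    rw [hn]
    push_cast
    simp only [mul_pow]
    ring

lemma R2 (m : ℕ) (q u1 u2 : ℂ) :
    deriv (fun y => ThetaDi (m+1) q u1 y) u2
      = (m.factorial : ℂ) *
        ((Complex.exp u1 * (q * Complex.exp u2))
            * deriv (fun x => theta2P1 m q x (2*u1+u2)) (Complex.exp u1 * (1 + q * Complex.exp u2))
          + deriv (fun y => theta2P1 m q (Complex.exp u1 * (1 + q * Complex.exp u2)) y) (2*u1+u2)) := by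
  have hsum : ∑ e ∈ Finset.range (m+1+1), (e:ℂ) * (((m+1).choose e : ℂ))^2 * (q * Complex.exp u2)^e
      = (q * Complex.exp u2) * ((((m+1).factorial : ℕ):ℂ) * ∑ d ∈ Finset.range ((m+1)/2+1),
          ((d:ℂ) * (q * Complex.exp u2)^(d-1) * (1+(q * Complex.exp u2))^(m+1-2*d)
            + (q * Complex.exp u2)^d * ((((m+1-2*d:ℕ)):ℂ) * (1+(q * Complex.exp u2))^(m+1-2*d-1) * 1))
            / ((d.factorial : ℂ)^2 * ((m+1-2*d).factorial : ℂ))) := by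
    rw [key2 (m+1) (q * Complex.exp u2), Finset.mul_sum]
    apply Finset.sum_congr rfl
    intro e _
    rcases e with _|e
    · simp
    · rw [Nat.add_sub_cancel]
      push_cast
      ring
  rw [deriv_Theta_y (m+1) q u1 u2, hSa, hSb, hsum, Complex.exp_nat_mul,
    mul_add ((m.factorial:ℕ):ℂ)]
  simp only [Finset.mul_sum]
  rw [← Finset.sum_add_distrib]
  apply Finset.sum_congr rfl
  intro d hd
  have h2 : 2*d ≤ m+1 := by
    have := Finset.mem_range.mp hd
    omega
  have hfact : (((m+1).factorial : ℕ):ℂ) = ((m+1:ℕ):ℂ) * ((m.factorial : ℕ):ℂ) := by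
    rw [Nat.factorial_succ]; push_cast; ring
  have hBd := pow_pred_mul (q * Complex.exp u2) d
  rw [hfact]
  rcases Nat.eq_zero_or_pos (m+1-2*d) with h0 | hpos
  · have hm1 : m + 1 = 2*d := by omega
    have hnz : ((2*d:ℕ):ℂ) ≠ 0 := by
      have : (0:ℕ) < 2*d := by omega
      exact_mod_cast Nat.cast_pos.mpr this |>.ne'
    have hinv : ((2*d:ℕ):ℂ)⁻¹ * ((2*d:ℕ):ℂ) = 1 := inv_mul_cancel₀ hnz
    rw [h0, hm1]
    simp only [Nat.zero_sub, pow_zero, Nat.factorial_zero, Nat.cast_zero]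
    push_cast at hinv ⊢
    simp only [mul_pow]
    linear_combination ((Complex.exp u1)^(2*d)*(q*Complex.exp u2)
        *((m.factorial:ℕ):ℂ)*((d:ℂ)*(q*Complex.exp u2)^(d-1))/((d.factorial:ℂ)^2*1)) * hinv
      + (((m.factorial:ℕ):ℂ)*(Complex.exp u1)^(2*d)/((d.factorial:ℂ)^2*1)) * hBd
  · obtain ⟨M, hM⟩ : ∃ M, m+1-2*d = M+1 := ⟨m-2*d, by omega⟩
    have hn : m + 1 = 2*d + (M+1) := by omega
    have hnz : ((2*d+(M+1):ℕ):ℂ) ≠ 0 := by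
      exact Nat.cast_ne_zero.mpr (by omega)
    have hinv : ((2*d+(M+1):ℕ):ℂ)⁻¹ * ((2*d+(M+1):ℕ):ℂ) = 1 := inv_mul_cancel₀ hnz
    rw [hM]
    simp only [Nat.add_sub_cancel]
    rw [hn]
    push_cast at hinv ⊢
    simp only [mul_pow]
    linear_combination ((Complex.exp u1)^(2*d+(M+1))*(q*Complex.exp u2)*((m.factorial:ℕ):ℂ)
        *((d:ℂ)*(q*Complex.exp u2)^(d-1)*(1+q*Complex.exp u2)^(M+1)
          + (q*Complex.exp u2)^d*(((M:ℂ)+1)*(1+q*Complex.exp u2)^M*1))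
        /((d.factorial:ℂ)^2*(((M+1).factorial:ℕ):ℂ))) * hinv
      + (((m.factorial:ℕ):ℂ)*(Complex.exp u1)^(2*d+(M+1))*(1+q*Complex.exp u2)^(M+1)
        /((d.factorial:ℂ)^2*(((M+1).factorial:ℕ):ℂ))) * hBd

/-- the `(2,2)`-case computation in the proof of Lemma 3.2,
pairing the gradients of `θ^{P1}_{2,k}`, `θ^{P1}_{2,ℓ}` with the intersection
form `g = ((2q e^{v²}, v¹),(v¹,2))` at `v = v(u)`, versus the pairing of the
gradients of `Θ_{k+1}`, `Θ_{ℓ+1}` with `η̂⁻¹ = ((0,1),(1,-2))`. -/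
theorem stmt15 (k l : ℕ) (u1 u2 q : ℂ) :
    2 * q * Complex.exp (2 * u1 + u2)
        * deriv (fun x => theta2P1 k q x (2 * u1 + u2)) (Complex.exp u1 * (1 + q * Complex.exp u2))
        * deriv (fun x => theta2P1 l q x (2 * u1 + u2)) (Complex.exp u1 * (1 + q * Complex.exp u2))
      + Complex.exp u1 * (1 + q * Complex.exp u2) *
          (deriv (fun x => theta2P1 k q x (2 * u1 + u2)) (Complex.exp u1 * (1 + q * Complex.exp u2))
              * deriv (fun y => theta2P1 l q (Complex.exp u1 * (1 + q * Complex.exp u2)) y) (2 * u1 + u2)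
            + deriv (fun y => theta2P1 k q (Complex.exp u1 * (1 + q * Complex.exp u2)) y) (2 * u1 + u2)
              * deriv (fun x => theta2P1 l q x (2 * u1 + u2)) (Complex.exp u1 * (1 + q * Complex.exp u2)))
      + 2 * deriv (fun y => theta2P1 k q (Complex.exp u1 * (1 + q * Complex.exp u2)) y) (2 * u1 + u2)
          * deriv (fun y => theta2P1 l q (Complex.exp u1 * (1 + q * Complex.exp u2)) y) (2 * u1 + u2)
    = 1 / ((k.factorial : ℂ) * (l.factorial : ℂ)) *
        (deriv (fun x => ThetaDi (k + 1) q x u2) u1 * deriv (fun y => ThetaDi (l + 1) q u1 y) u2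
          + deriv (fun y => ThetaDi (k + 1) q u1 y) u2 * deriv (fun x => ThetaDi (l + 1) q x u2) u1
          - 2 * deriv (fun y => ThetaDi (k + 1) q u1 y) u2
              * deriv (fun y => ThetaDi (l + 1) q u1 y) u2) := by
  rw [R1 k q u1 u2, R1 l q u1 u2, R2 k q u1 u2, R2 l q u1 u2]
  have he : Complex.exp (2 * u1 + u2) = (Complex.exp u1)^2 * Complex.exp u2 := by
    rw [Complex.exp_add, show (2:ℂ) * u1 = ((2:ℕ):ℂ) * u1 by norm_num, Complex.exp_nat_mul]
  rw [he]
  have hk : ((k.factorial : ℕ):ℂ) ≠ 0 := fact_cast_ne k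
  have hl : ((l.factorial : ℕ):ℂ) ≠ 0 := fact_cast_ne l
  field_simp
  ring
end
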